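/- Let ω be a skew-symmetric k-bilinear form on a finite-dimensional k-vector space E. For all f, a, b ∈ TE one has {f, a·b − b·a}_ω ∈ [TE,TE] and {a·b − b·a, f}_ω ∈ [TE,TE]. Consequently the pairing {·,·}_ω descends to a well-defined k-bilinear pairing on the quotient TE/[TE,TE]. (Well-definedness step in Proposition 1.2 / Theorem 2.2 of the paper.) -/
import Mathlib


/- STATEMENT 2 (well-definedness step in Proposition 1.2 / Theorem 2.2): For a
skew-symmetric bilinear form ω on a finite-dimensional k-vector space E, the pairing
{·,·}_ω satisfies {f, ab − ba}_ω ∈ [TE,TE] and {ab − ba, f}_ω ∈ [TE,TE] for all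
f, a, b ∈ TE; consequently it descends to a k-bilinear pairing on TE/[TE,TE]. -/

noncomputable section

open scoped BigOperators

/-- The product `u_1 ⊗ ⋯ ⊗ u_p` in the tensor algebra associated to a list of vectors. -/
def wordProd (k : Type*) [Field k] {E : Type*} [AddCommGroup E] [Module k E]
    (w : List E) : TensorAlgebra k E :=
  (w.map fun e => TensorAlgebra.ι k e).prod

/-- The list obtained from `w` by deleting the entry at position `i` and cyclically rotating
so that the entries after position `i` come first. -/
def rotAt {E : Type*} (w : List E) (i : ℕ) : List E :=
  w.drop (i + 1) ++ w.take i

/-- `[TE,TE]`: the k-linear span of all commutators in the tensor algebra. -/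
def commSpan (k E : Type*) [Field k] [AddCommGroup E] [Module k E] :
    Submodule k (TensorAlgebra k E) :=
  Submodule.span k {z | ∃ a b : TensorAlgebra k E, z = a * b - b * a}

/-- The value of the pairing `{·,·}_ω` on a pair of homogeneous tensors
`u_1 ⊗ ⋯ ⊗ u_p`, `v_1 ⊗ ⋯ ⊗ v_q`:
`Σ_{i,j} ω(u_i, v_j) • u_{i+1}⊗⋯⊗u_p⊗u_1⊗⋯⊗u_{i−1} ⊗ v_{j+1}⊗⋯⊗v_q⊗v_1⊗⋯⊗v_{j−1}`. -/
def wordBracket {k : Type*} [Field k] {E : Type*} [AddCommGroup E] [Module k E]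
    (ω : E →ₗ[k] E →ₗ[k] k) (u v : List E) : TensorAlgebra k E :=
  ∑ i : Fin u.length, ∑ j : Fin v.length,
    ω (u.get i) (v.get j) • wordProd k (rotAt u i ++ rotAt v j)

/-! ### Auxiliary lemmas -/

namespace GinzburgAux

variable {k : Type*} [Field k] {E : Type*} [AddCommGroup E] [Module k E]

lemma wordProd_append (u v : List E) :
    wordProd k (u ++ v) = wordProd k u * wordProd k v := by
  simp [wordProd]

variable {M : Type*} [AddCommMonoid M]

/-- The generic "cyclic sum" appearing in `wordBracket`. -/
def cycSum (F : E → List E → M) (v : List E) : M :=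
  ∑ j : Fin v.length, F (v.get j) (rotAt v j)

lemma cycSum_eq_range (F : E → List E → M) (v : List E) :
    cycSum F v = ∑ j ∈ Finset.range v.length, F (v.getD j 0) (rotAt v j) := by
  rw [cycSum]
  rw [← Fin.sum_univ_eq_sum_range (fun j => F (v.getD j 0) (rotAt v j)) v.length]
  refine Finset.sum_congr rfl fun j _ => ?_
  congr 1
  rw [List.getD_eq_getElem v 0 j.isLt]
  rfl

lemma cycSum_rotate_one (F : E → List E → M) (x : E) (t : List E) :
    cycSum F (x :: t) = cycSum F (t ++ [x]) := by
  rw [cycSum_eq_range, cycSum_eq_range]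
  have hlen : (x :: t).length = t.length + 1 := rfl
  have hlen2 : (t ++ [x]).length = t.length + 1 := by simp
  rw [hlen, hlen2, Finset.sum_range_succ', Finset.sum_range_succ]
  congr 1
  · refine Finset.sum_congr rfl fun j hj => ?_
    rw [Finset.mem_range] at hj
    have h1 : (x :: t).getD (j + 1) 0 = t.getD j 0 := rfl
    have h2 : (t ++ [x]).getD j 0 = t.getD j 0 := by
      rw [List.getD_eq_getElem _ _ (by simp; omega), List.getD_eq_getElem _ _ hj]
      exact List.getElem_append_left hj
    have h3 : rotAt (x :: t) (j + 1) = rotAt (t ++ [x]) j := by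
      unfold rotAt
      rw [List.drop_append_of_le_length (by omega),
        List.take_append_of_le_length (by omega)]
      simp [List.append_assoc]
    rw [h1, h2, h3]
  · have h1 : (t ++ [x]).getD t.length 0 = x := by
      rw [List.getD_eq_getElem _ _ (by simp)]
      rw [List.getElem_append_right (le_refl _)]
      simp
    have h2 : rotAt (x :: t) 0 = t := by simp [rotAt]
    have h3 : rotAt (t ++ [x]) t.length = t := by
      unfold rotAt
      rw [List.take_left]
      have hd : (t ++ [x]).drop (t.length + 1) = [] := by
        apply List.drop_eq_nil_of_le
        simp
      rw [hd]
      simp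
    rw [h1, h2, h3]
    rfl

lemma cycSum_rotate (F : E → List E → M) (v : List E) (n : ℕ) :
    cycSum F (v.rotate n) = cycSum F v := by
  induction n generalizing v with
  | zero => simp
  | succ n ih =>
    cases v with
    | nil => simp
    | cons x t =>
      rw [List.rotate_cons_succ, ih, ← cycSum_rotate_one]

variable (ω : E →ₗ[k] E →ₗ[k] k)

lemma wordBracket_rot_right (u v : List E) (n : ℕ) :
    wordBracket ω u (v.rotate n) = wordBracket ω u v := by
  unfold wordBracket
  refine Finset.sum_congr rfl fun i _ => ?_
  exact cycSum_rotate (fun e l => ω (u.get i) e • wordProd k (rotAt u i ++ l)) v n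

lemma wordBracket_rot_left (u v : List E) (n : ℕ) :
    wordBracket ω (u.rotate n) v = wordBracket ω u v := by
  unfold wordBracket
  rw [Finset.sum_comm]
  conv_rhs => rw [Finset.sum_comm]
  refine Finset.sum_congr rfl fun j _ => ?_
  exact cycSum_rotate (fun e l => ω e (v.get j) • wordProd k (l ++ rotAt v j)) u n

lemma append_rotate (a b : List E) : b ++ a = (a ++ b).rotate a.length := by
  rw [List.rotate_eq_drop_append_take (by simp), List.drop_left, List.take_left]

lemma wordBracket_swap_right (u a b : List E) :
    wordBracket ω u (a ++ b) = wordBracket ω u (b ++ a) := by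
  rw [append_rotate a b, wordBracket_rot_right]

lemma wordBracket_swap_left (u a b : List E) :
    wordBracket ω (a ++ b) u = wordBracket ω (b ++ a) u := by
  rw [append_rotate a b, wordBracket_rot_left]

end GinzburgAux

open GinzburgAux Pointwise

theorem ginzburg_bracket_descends
    (k : Type*) [Field k] [CharZero k]
    (E : Type*) [AddCommGroup E] [Module k E] [FiniteDimensional k E]
    (ω : E →ₗ[k] E →ₗ[k] k)
    (hskew : ∀ x y : E, ω x y = - ω y x)
    -- `Br` is the k-bilinear pairing `{·,·}_ω : TE × TE → TE`, determined by its values on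
    -- homogeneous tensors (and vanishing when either argument lies in E^{⊗0} = k):
    (Br : TensorAlgebra k E →ₗ[k] TensorAlgebra k E →ₗ[k] TensorAlgebra k E)
    (hBr : ∀ u v : List E, Br (wordProd k u) (wordProd k v) = wordBracket ω u v) :
    -- {f, ab − ba}_ω and {ab − ba, f}_ω lie in [TE,TE]:
    (∀ f a b : TensorAlgebra k E,
        Br f (a * b - b * a) ∈ commSpan k E ∧ Br (a * b - b * a) f ∈ commSpan k E) ∧
    -- consequently, {·,·}_ω descends to a well-defined k-bilinear pairing on TE/[TE,TE]:
    (∃ BrQ : (TensorAlgebra k E ⧸ commSpan k E) →ₗ[k]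
        (TensorAlgebra k E ⧸ commSpan k E) →ₗ[k] (TensorAlgebra k E ⧸ commSpan k E),
      ∀ f g : TensorAlgebra k E,
        BrQ (Submodule.Quotient.mk f) (Submodule.Quotient.mk g) =
          Submodule.Quotient.mk (Br f g)) := by
  classical
  -- Words span the tensor algebra.
  set S : Set (TensorAlgebra k E) := Set.range (wordProd k (E := E)) with hS
  have hspan : ∀ x : TensorAlgebra k E, x ∈ Submodule.span k S := by
    intro x
    induction x using TensorAlgebra.induction with
    | algebraMap r =>
      have h1 : (algebraMap k (TensorAlgebra k E)) r = r • wordProd k ([] : List E) := by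
        rw [Algebra.algebraMap_eq_smul_one]
        rfl
      rw [h1]
      exact Submodule.smul_mem _ _ (Submodule.subset_span ⟨[], rfl⟩)
    | ι x =>
      refine Submodule.subset_span ⟨[x], ?_⟩
      simp [wordProd]
    | mul a b ha hb =>
      have hss : S * S ⊆ S := by
        rintro z ⟨x, ⟨u, rfl⟩, y, ⟨v, rfl⟩, rfl⟩
        exact ⟨u ++ v, by simp [wordProd_append]⟩
      have := Submodule.mul_mem_mul ha hb
      rw [Submodule.span_mul_span] at this
      exact Submodule.span_mono hss this
    | add a b ha hb => exact Submodule.add_mem _ ha hb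
  -- `Br` vanishes on (word, commutator of words).
  have hword : ∀ w ua ub : List E,
      Br (wordProd k w)
        (wordProd k ua * wordProd k ub - wordProd k ub * wordProd k ua) = 0 := by
    intro w ua ub
    rw [map_sub, ← wordProd_append, ← wordProd_append, hBr, hBr,
      wordBracket_swap_right ω w ua ub, sub_self]
  have hword' : ∀ w ua ub : List E,
      Br (wordProd k ua * wordProd k ub - wordProd k ub * wordProd k ua)
        (wordProd k w) = 0 := by
    intro w ua ub
    rw [map_sub, LinearMap.sub_apply, ← wordProd_append, ← wordProd_append, hBr, hBr,
      wordBracket_swap_left ω w ua ub, sub_self]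
  -- Extend to arbitrary second factor of the commutator.
  have hA : ∀ (w ua : List E) (b : TensorAlgebra k E),
      Br (wordProd k w) (wordProd k ua * b - b * wordProd k ua) = 0 := by
    intro w ua b
    induction hspan b using Submodule.span_induction with
    | mem x hx =>
      obtain ⟨ub, rfl⟩ := hx
      exact hword w ua ub
    | zero => simp
    | add x y _ _ hx hy =>
      have : wordProd k ua * (x + y) - (x + y) * wordProd k ua
          = (wordProd k ua * x - x * wordProd k ua)
            + (wordProd k ua * y - y * wordProd k ua) := by
        noncomm_ring
      rw [this, map_add, hx, hy, add_zero]
    | smul r x _ hx =>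
      have : wordProd k ua * (r • x) - (r • x) * wordProd k ua
          = r • (wordProd k ua * x - x * wordProd k ua) := by
        rw [smul_sub, mul_smul_comm, smul_mul_assoc]
      rw [this, map_smul, hx, smul_zero]
  -- Extend to arbitrary first factor of the commutator.
  have hB : ∀ (w : List E) (a b : TensorAlgebra k E),
      Br (wordProd k w) (a * b - b * a) = 0 := by
    intro w a b
    induction hspan a using Submodule.span_induction with
    | mem x hx =>
      obtain ⟨ua, rfl⟩ := hx
      exact hA w ua b
    | zero => simp
    | add x y _ _ hx hy =>
      have : (x + y) * b - b * (x + y)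
          = (x * b - b * x) + (y * b - b * y) := by noncomm_ring
      rw [this, map_add, hx, hy, add_zero]
    | smul r x _ hx =>
      have : (r • x) * b - b * (r • x) = r • (x * b - b * x) := by
        rw [smul_sub, mul_smul_comm, smul_mul_assoc]
      rw [this, map_smul, hx, smul_zero]
  -- Extend to arbitrary `f` in the first slot.
  have hF : ∀ f a b : TensorAlgebra k E, Br f (a * b - b * a) = 0 := by
    intro f a b
    induction hspan f using Submodule.span_induction with
    | mem x hx =>
      obtain ⟨w, rfl⟩ := hx
      exact hB w a b
    | zero => simp
    | add x y _ _ hx hy => rw [map_add, LinearMap.add_apply, hx, hy, add_zero]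
    | smul r x _ hx => rw [map_smul, LinearMap.smul_apply, hx, smul_zero]
  -- The symmetric statements for the other slot.
  have hA' : ∀ (w ua : List E) (b : TensorAlgebra k E),
      Br (wordProd k ua * b - b * wordProd k ua) (wordProd k w) = 0 := by
    intro w ua b
    induction hspan b using Submodule.span_induction with
    | mem x hx =>
      obtain ⟨ub, rfl⟩ := hx
      exact hword' w ua ub
    | zero => simp
    | add x y _ _ hx hy =>
      have : wordProd k ua * (x + y) - (x + y) * wordProd k ua
          = (wordProd k ua * x - x * wordProd k ua)
            + (wordProd k ua * y - y * wordProd k ua) := by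
        noncomm_ring
      rw [this, map_add, LinearMap.add_apply, hx, hy, add_zero]
    | smul r x _ hx =>
      have : wordProd k ua * (r • x) - (r • x) * wordProd k ua
          = r • (wordProd k ua * x - x * wordProd k ua) := by
        rw [smul_sub, mul_smul_comm, smul_mul_assoc]
      rw [this, map_smul, LinearMap.smul_apply, hx, smul_zero]
  have hB' : ∀ (w : List E) (a b : TensorAlgebra k E),
      Br (a * b - b * a) (wordProd k w) = 0 := by
    intro w a b
    induction hspan a using Submodule.span_induction with
    | mem x hx =>
      obtain ⟨ua, rfl⟩ := hx
      exact hA' w ua b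
    | zero => simp
    | add x y _ _ hx hy =>
      have : (x + y) * b - b * (x + y)
          = (x * b - b * x) + (y * b - b * y) := by noncomm_ring
      rw [this, map_add, LinearMap.add_apply, hx, hy, add_zero]
    | smul r x _ hx =>
      have : (r • x) * b - b * (r • x) = r • (x * b - b * x) := by
        rw [smul_sub, mul_smul_comm, smul_mul_assoc]
      rw [this, map_smul, LinearMap.smul_apply, hx, smul_zero]
  have hF' : ∀ f a b : TensorAlgebra k E, Br (a * b - b * a) f = 0 := by
    intro f a b
    induction hspan f using Submodule.span_induction with
    | mem x hx =>
      obtain ⟨w, rfl⟩ := hx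
      exact hB' w a b
    | zero => simp
    | add x y _ _ hx hy => rw [map_add, hx, hy, add_zero]
    | smul r x _ hx => rw [map_smul, hx, smul_zero]
  refine ⟨fun f a b => ?_, ?_⟩
  · rw [hF f a b, hF' f a b]
    exact ⟨Submodule.zero_mem _, Submodule.zero_mem _⟩
  · -- Descend to the quotient.
    have hker : ∀ f : TensorAlgebra k E,
        commSpan k E ≤ LinearMap.ker ((commSpan k E).mkQ ∘ₗ Br f) := by
      intro f
      refine Submodule.span_le.mpr ?_
      rintro z ⟨a, b, rfl⟩
      simp only [SetLike.mem_coe, LinearMap.mem_ker, LinearMap.comp_apply, hF f a b,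
        map_zero]
    set L : TensorAlgebra k E →ₗ[k]
        (TensorAlgebra k E ⧸ commSpan k E) →ₗ[k] (TensorAlgebra k E ⧸ commSpan k E) :=
      { toFun := fun f =>
          Submodule.liftQ (commSpan k E) ((commSpan k E).mkQ ∘ₗ Br f) (hker f)
        map_add' := fun f g => by
          apply Submodule.linearMap_qext
          ext x
          simp
        map_smul' := fun r f => by
          apply Submodule.linearMap_qext
          ext x
          simp } with hL
    have hLker : commSpan k E ≤ LinearMap.ker L := by
      refine Submodule.span_le.mpr ?_
      rintro z ⟨a, b, rfl⟩
      simp only [SetLike.mem_coe, LinearMap.mem_ker]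
      apply Submodule.linearMap_qext
      ext x
      show ((commSpan k E).mkQ ∘ₗ Br (a * b - b * a)) x = 0
      simp only [LinearMap.comp_apply, hF' x a b, map_zero]
    refine ⟨Submodule.liftQ (commSpan k E) L hLker, fun f g => ?_⟩
    simp [hL]
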